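/- The modified two-point kernel K₂(x,y) = (1+x²)(1+y²)/((x-y)²(1+xy)²) is invariant under D₂(λ) with the weight of a dimension-1 field: for all λ > 0 and distinct x, y ∈ (0,1), (D₂(λ))'(x) · (D₂(λ))'(y) · K₂(D₂(λ)x, D₂(λ)y) = K₂(x,y). -/

import Mathlib

/-!
Since `ξ ∘ D₂(λ) = λ · ξ`, the kernel `K₂` is the pull-back by `ξ` of the dimension-1 kernel
`1 / (u - v)²`: `K₂(x, y) = ξ'(x) ξ'(y) / (ξ(x) - ξ(y))²`, and `1 / (u - v)²` is invariant under
`u ↦ λ u` with weight `λ` per point. The chain rule `ξ'(D₂(λ) x) · (D₂(λ))'(x) = λ ξ'(x)` then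
transports this invariance to `K₂`.
-/

/-- The stretching map ξ(x) = 2x/(1-x²). -/
noncomputable def xi (x : ℝ) : ℝ := 2 * x / (1 - x ^ 2)

/-- The inverse map ξ⁻¹(y) = (√(y²+1)-1)/y. -/
noncomputable def xiInv (y : ℝ) : ℝ := (Real.sqrt (y ^ 2 + 1) - 1) / y

/-- The lifted dilation D₂(λ) = ξ⁻¹ ∘ D(λ) ∘ ξ on (0,1). -/
noncomputable def D2 (l x : ℝ) : ℝ := xiInv (l * xi x)

/-- The modified two-point kernel K₂(x,y) = (1+x²)(1+y²)/((x-y)²(1+xy)²). -/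
noncomputable def K2 (x y : ℝ) : ℝ :=
  (1 + x ^ 2) * (1 + y ^ 2) / ((x - y) ^ 2 * (1 + x * y) ^ 2)

noncomputable def xiDeriv (x : ℝ) : ℝ := 2 * (1 + x ^ 2) / (1 - x ^ 2) ^ 2

lemma xiDeriv_ne_zero {x : ℝ} (hx : 1 - x ^ 2 ≠ 0) : xiDeriv x ≠ 0 := by
  unfold xiDeriv
  positivity

lemma hasDerivAt_xi {x : ℝ} (hx : 1 - x ^ 2 ≠ 0) : HasDerivAt xi (xiDeriv x) x := by
  have hnum : HasDerivAt (fun x : ℝ => 2 * x) 2 x := by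
    simpa using (hasDerivAt_id x).const_mul 2
  have hden : HasDerivAt (fun x : ℝ => 1 - x ^ 2) (-(2 * x)) x := by
    simpa using (hasDerivAt_pow 2 x).const_sub 1
  refine (hnum.div hden hx).congr_deriv ?_
  unfold xiDeriv
  field_simp
  ring

lemma xi_sub {a b : ℝ} (ha : 1 - a ^ 2 ≠ 0) (hb : 1 - b ^ 2 ≠ 0) :
    xi a - xi b = 2 * (a - b) * (1 + a * b) / ((1 - a ^ 2) * (1 - b ^ 2)) := by
  unfold xi
  field_simp
  ring

-- Where `(a - b)(1 + a b) = 0`, both sides are `0` by division by zero.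
lemma K2_eq_xiDeriv_mul_div {a b : ℝ} (ha : 1 - a ^ 2 ≠ 0) (hb : 1 - b ^ 2 ≠ 0) :
    K2 a b = xiDeriv a * xiDeriv b / (xi a - xi b) ^ 2 := by
  rw [xi_sub ha hb]
  unfold K2 xiDeriv
  field_simp

lemma one_sub_xiInv_sq {u : ℝ} (hu : u ≠ 0) :
    1 - xiInv u ^ 2 = 2 * (Real.sqrt (u ^ 2 + 1) - 1) / u ^ 2 := by
  have hs : Real.sqrt (u ^ 2 + 1) ^ 2 = u ^ 2 + 1 := Real.sq_sqrt (by positivity)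
  unfold xiInv
  field_simp
  linear_combination -hs

lemma one_lt_sqrt_sq_add_one {u : ℝ} (hu : u ≠ 0) : 1 < Real.sqrt (u ^ 2 + 1) := by
  have hu2 : 0 < u ^ 2 := by positivity
  rw [Real.lt_sqrt zero_le_one]
  linarith

lemma one_sub_xiInv_sq_pos (u : ℝ) : 0 < 1 - xiInv u ^ 2 := by
  rcases eq_or_ne u 0 with rfl | hu
  · simp [xiInv]
  · rw [one_sub_xiInv_sq hu]
    have hs := one_lt_sqrt_sq_add_one hu
    have hu2 : 0 < u ^ 2 := by positivity
    positivity

lemma xi_xiInv (u : ℝ) : xi (xiInv u) = u := by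
  rcases eq_or_ne u 0 with rfl | hu
  · simp [xi, xiInv]
  · have hs := (sub_pos.mpr (one_lt_sqrt_sq_add_one hu)).ne'
    rw [xi, one_sub_xiInv_sq hu, xiInv]
    field_simp

lemma hasDerivAt_xiInv {u : ℝ} (hu : u ≠ 0) :
    HasDerivAt xiInv (xiDeriv (xiInv u))⁻¹ u := by
  have hpos := (one_sub_xiInv_sq_pos u).ne'
  refine HasDerivAt.of_local_left_inverse ?_ (hasDerivAt_xi hpos) (xiDeriv_ne_zero hpos)
    (Filter.Eventually.of_forall xi_xiInv)
  unfold xiInv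
  fun_prop (disch := exact hu)

lemma xi_D2 (l x : ℝ) : xi (D2 l x) = l * xi x := xi_xiInv _

lemma hasDerivAt_D2 {l x : ℝ} (hx : 1 - x ^ 2 ≠ 0) (hu : l * xi x ≠ 0) :
    HasDerivAt (D2 l) ((xiDeriv (D2 l x))⁻¹ * (l * xiDeriv x)) x :=
  (hasDerivAt_xiInv hu).comp x ((hasDerivAt_xi hx).const_mul l)

theorem K2_D2_invariant_general (l x y : ℝ) (hl : 0 < l) (hx : x ∈ Set.Ioo (0 : ℝ) 1)
    (hy : y ∈ Set.Ioo (0 : ℝ) 1) :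
    deriv (D2 l) x * deriv (D2 l) y * K2 (D2 l x) (D2 l y) = K2 x y := by
  have one_sub_sq_ne {t : ℝ} (ht : t ∈ Set.Ioo (0 : ℝ) 1) : 1 - t ^ 2 ≠ 0 := by
    nlinarith [ht.1, ht.2]
  have l_mul_xi_ne {t : ℝ} (ht : t ∈ Set.Ioo (0 : ℝ) 1) : l * xi t ≠ 0 :=
    mul_ne_zero hl.ne' (div_ne_zero (by linarith [ht.1]) (one_sub_sq_ne ht))
  have hDx : 1 - D2 l x ^ 2 ≠ 0 := (one_sub_xiInv_sq_pos _).ne'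
  have hDy : 1 - D2 l y ^ 2 ≠ 0 := (one_sub_xiInv_sq_pos _).ne'
  rw [(hasDerivAt_D2 (one_sub_sq_ne hx) (l_mul_xi_ne hx)).deriv,
    (hasDerivAt_D2 (one_sub_sq_ne hy) (l_mul_xi_ne hy)).deriv,
    K2_eq_xiDeriv_mul_div hDx hDy,
    xi_D2, xi_D2, K2_eq_xiDeriv_mul_div (one_sub_sq_ne hx) (one_sub_sq_ne hy), ← mul_sub,
    mul_pow]
  have hξ'x := xiDeriv_ne_zero hDx
  have hξ'y := xiDeriv_ne_zero hDy
  field_simp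

/-- K₂ is invariant under D₂(λ) with the weight of a dimension-1 field. -/
theorem K2_D2_invariant (l x y : ℝ) (hl : 0 < l) (hx : x ∈ Set.Ioo (0 : ℝ) 1)
    (hy : y ∈ Set.Ioo (0 : ℝ) 1) (hxy : x ≠ y) :
    deriv (D2 l) x * deriv (D2 l) y * K2 (D2 l x) (D2 l y) = K2 x y :=
  K2_D2_invariant_general l x y hl hx hy
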